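/- arXiv:1711.08104 — 3 statements merged into one kernel-verified Lean document; each statement's English description precedes it below -/
import Mathlib

section
/- Let γ ∈ H²(𝕋¹; ℝ³) have unit speed, and define the curvature maximal function κ*_γ(x) := sup_{0<ℓ<π} (1/2ℓ)∫_{x-ℓ}^{x+ℓ} |γ''(z)| dz. If δ(x,y) is defined by |γ(x)-γ(y)|² = (1-δ(x,y))ϑ(x-y)², then δ(x,y) ≤ ϑ(x-y)·κ*_γ(x). -/
open MeasureTheory Real

/-- Geodesic distance on the torus `𝕋¹ = [-π,π]` with endpoints identified. -/
noncomputable def vartheta (z : ℝ) : ℝ :=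
  |z - 2 * π * ((round (z / (2 * π)) : ℤ) : ℝ)|

open Set
open scoped RealInnerProductSpace

/-! Write `γ x - γ y` as `± ∫ γ'` over an interval of length `t = ϑ(x - y) ≤ π` with endpoint `x`.
On that interval the maximal function bound gives `‖γ' s - γ' x‖ ≤ 2M|s - x|`, so for unit vectors
`⟪γ' x, γ' s⟫ ≥ 1 - 2M²(s - x)²`. Pairing the chord with `γ' x` then gives
`‖γ x - γ y‖ ≥ t - 2M²t³/3`, and elementary algebra turns this into `t² - ‖γ x - γ y‖² ≤ M t³`. -/

lemma vartheta_le_pi (z : ℝ) : vartheta z ≤ π := by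
  have hround := abs_sub_round (z / (2 * π))
  have hscale : z - 2 * π * (round (z / (2 * π)) : ℝ) =
      2 * π * (z / (2 * π) - round (z / (2 * π))) := by
    field_simp
  rw [vartheta, hscale, abs_mul, abs_of_pos (by positivity)]
  nlinarith [pi_pos]

lemma sq_sub_sq_le_of_sub_cube_le {t w K : ℝ} (ht : 0 ≤ t) (hK : 0 ≤ K)
    (hw : t - K ^ 2 * t ^ 3 / 6 ≤ w) : t ^ 2 - w ^ 2 ≤ K * t ^ 3 / 2 := by
  rcases le_total 2 (K * t) with hKt | hKt
  · nlinarith [mul_nonneg (sq_nonneg t) (sub_nonneg.2 hKt)]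
  · -- with `c = K t ∈ [0, 2]` the claim reduces to `c (18 - 12 c + c³) ≥ 0`
    set c := K * t
    have hU : 0 ≤ t - K ^ 2 * t ^ 3 / 6 := by
      have : c ^ 2 ≤ 4 := by nlinarith [mul_nonneg hK ht]
      nlinarith [mul_nonneg ht (sub_nonneg.2 this)]
    have hsq : (t - K ^ 2 * t ^ 3 / 6) ^ 2 ≤ w ^ 2 := pow_le_pow_left₀ hU hw 2
    have hc : 0 ≤ c * (18 - 12 * c + c ^ 3) := by
      nlinarith [mul_nonneg hK ht, mul_nonneg (mul_nonneg hK ht) (sq_nonneg (c - 2))]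
    have key : t ^ 2 - (t - K ^ 2 * t ^ 3 / 6) ^ 2 + t ^ 2 * (c * (18 - 12 * c + c ^ 3)) / 36
        = K * t ^ 3 / 2 := by simp only [c]; ring
    nlinarith [mul_nonneg (sq_nonneg t) hc]

lemma integral_one_sub_mul_sq (x t K : ℝ) :
    ∫ s in x..x + t, (1 - K ^ 2 / 2 * (s - x) ^ 2) = t - K ^ 2 * t ^ 3 / 6 := by
  rw [intervalIntegral.integral_sub intervalIntegrable_const
    (by apply Continuous.intervalIntegrable; fun_prop),
    intervalIntegral.integral_const_mul, intervalIntegral.integral_comp_sub_right (· ^ 2)]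
  simp only [intervalIntegral.integral_const, add_sub_cancel_left, smul_eq_mul, mul_one, sub_self,
    integral_pow]
  ring

section UnitVectorField

variable {E : Type*} [NormedAddCommGroup E] [InnerProductSpace ℝ E] [CompleteSpace E]

lemma sub_le_norm_integral_of_norm_sub_le {g : ℝ → E} {x t K : ℝ} (ht : 0 ≤ t)
    (hg : IntervalIntegrable g volume x (x + t)) (hunit : ∀ s ∈ Icc x (x + t), ‖g s‖ = 1)
    (hK : ∀ s ∈ Icc x (x + t), ‖g s - g x‖ ≤ K * (s - x)) :
    t - K ^ 2 * t ^ 3 / 6 ≤ ‖∫ s in x..x + t, g s‖ := by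
  have hx : x ∈ Icc x (x + t) := ⟨le_rfl, by linarith⟩
  have hinner : ∫ s in x..x + t, ⟪g x, g s⟫ = ⟪g x, ∫ s in x..x + t, g s⟫ :=
    (innerSL ℝ (g x)).intervalIntegral_comp_comm hg
  calc t - K ^ 2 * t ^ 3 / 6 = ∫ s in x..x + t, (1 - K ^ 2 / 2 * (s - x) ^ 2) :=
        (integral_one_sub_mul_sq x t K).symm
    _ ≤ ∫ s in x..x + t, ⟪g x, g s⟫ := by
        refine intervalIntegral.integral_mono_on (by linarith)
          (by apply Continuous.intervalIntegrable; fun_prop)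
          ⟨hg.1.const_inner (g x), hg.2.const_inner (g x)⟩ fun s hs => ?_
        have hdist : ‖g s - g x‖ ^ 2 = 2 - 2 * ⟪g x, g s⟫ := by
          rw [norm_sub_sq_real, hunit s hs, hunit x hx, real_inner_comm]; ring
        have hsq : ‖g s - g x‖ ^ 2 ≤ (K * (s - x)) ^ 2 :=
          pow_le_pow_left₀ (norm_nonneg _) (hK s hs) 2
        nlinarith
    _ = ⟪g x, ∫ s in x..x + t, g s⟫ := hinner
    _ ≤ ‖∫ s in x..x + t, g s‖ := by
        simpa [hunit x hx] using real_inner_le_norm (g x) (∫ s in x..x + t, g s)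

lemma sq_sub_norm_integral_sq_le_of_norm_sub_le {g : ℝ → E} {x z K : ℝ} (hK0 : 0 ≤ K)
    (hg : IntervalIntegrable g volume x (x + z)) (hunit : ∀ s ∈ uIcc x (x + z), ‖g s‖ = 1)
    (hK : ∀ s ∈ uIcc x (x + z), ‖g s - g x‖ ≤ K * |s - x|) :
    z ^ 2 - ‖∫ s in x..x + z, g s‖ ^ 2 ≤ K * |z| ^ 3 / 2 := by
  rcases le_total 0 z with hz | hz
  · rw [uIcc_of_le (by linarith)] at hunit hK
    rw [abs_of_nonneg hz]
    refine sq_sub_sq_le_of_sub_cube_le hz hK0 (sub_le_norm_integral_of_norm_sub_le hz hg hunit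
      fun s hs => ?_)
    simpa [abs_of_nonneg (sub_nonneg.2 hs.1)] using hK s hs
  · rw [uIcc_of_ge (by linarith)] at hunit hK
    have hreflect : ∫ s in x..x + z, g s = -∫ s in x..x + -z, g (2 * x - s) := by
      rw [intervalIntegral.integral_comp_sub_left g, intervalIntegral.integral_symm]
      ring_nf
    have hmem : ∀ s ∈ Icc x (x + -z), 2 * x - s ∈ Icc (x + z) x := fun s hs =>
      ⟨by linarith [hs.2], by linarith [hs.1]⟩
    rw [hreflect, norm_neg, abs_of_nonpos hz, ← neg_sq]
    refine sq_sub_sq_le_of_sub_cube_le (by linarith) hK0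
      (sub_le_norm_integral_of_norm_sub_le (by linarith) ?_ (fun s hs => hunit _ (hmem s hs))
        fun s hs => ?_)
    · have := hg.comp_sub_left (2 * x)
      rwa [show 2 * x - (x + z) = x + -z by ring, show 2 * x - x = x by ring] at this
    · rw [show 2 * x - x = x by ring]
      have := hK _ (hmem s hs)
      rwa [show 2 * x - s - x = -(s - x) by ring, abs_neg, abs_of_nonneg (sub_nonneg.2 hs.1)]
        at this

end UnitVectorField

section AverageBound

variable {F : Type*} [NormedAddCommGroup F] [NormedSpace ℝ F]

lemma continuous_of_forall_sub_eq_integral {g g' : ℝ → F}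
    (hint : ∀ a b, IntervalIntegrable g' volume a b)
    (hftc : ∀ a b, g b - g a = ∫ s in a..b, g' s) : Continuous g := by
  have hg : g = fun b => g 0 + ∫ s in (0 : ℝ)..b, g' s := by
    funext b
    rw [← hftc 0 b, add_sub_cancel]
  rw [hg]
  exact continuous_const.add (intervalIntegral.continuous_primitive hint 0)

lemma norm_sub_le_of_average_norm_le {g g' : ℝ → F} {x R M : ℝ}
    (hint : ∀ a b, IntervalIntegrable g' volume a b)
    (hftc : ∀ a b, g b - g a = ∫ s in a..b, g' s)
    (hM : ∀ ℓ, 0 < ℓ → ℓ < R → (1 / (2 * ℓ)) * ∫ z in (x - ℓ)..(x + ℓ), ‖g' z‖ ≤ M)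
    {s : ℝ} (hs : |s - x| ≤ R) : ‖g s - g x‖ ≤ 2 * M * |s - x| := by
  have hopen : ∀ s, |s - x| < R → ‖g s - g x‖ ≤ 2 * M * |s - x| := by
    intro s hs
    rcases eq_or_ne s x with rfl | hsx
    · simp
    set r := |s - x|
    have hr : 0 < r := abs_pos.2 (sub_ne_zero.2 hsx)
    have hsub : uIoc x s ⊆ Ioc (x - r) (x + r) := by
      apply Ioc_subset_Ioc
      · simp only [le_min_iff]; constructor <;> linarith [neg_abs_le (s - x)]
      · simp only [max_le_iff]; constructor <;> linarith [le_abs_self (s - x)]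
    have hmean := hM r hr hs
    rw [one_div, inv_mul_le_iff₀ (by positivity)] at hmean
    calc ‖g s - g x‖ = ‖∫ z in x..s, g' z‖ := by rw [hftc]
      _ ≤ ∫ z in uIoc x s, ‖g' z‖ := intervalIntegral.norm_integral_le_integral_norm_uIoc
      _ ≤ ∫ z in Ioc (x - r) (x + r), ‖g' z‖ :=
          setIntegral_mono_set (hint _ _).norm.1 (ae_of_all _ fun _ => norm_nonneg _)
            hsub.eventuallyLE
      _ = ∫ z in (x - r)..(x + r), ‖g' z‖ := (intervalIntegral.integral_of_le (by linarith)).symm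
      _ ≤ 2 * M * r := by linarith
  -- the averages are only controlled for `ℓ < R`; the case `|s - x| = R` follows by continuity
  rcases eq_or_ne s x with rfl | hsx
  · simp
  have hR : 0 < R := (abs_pos.2 (sub_ne_zero.2 hsx)).trans_le hs
  have hclosed : IsClosed {s | ‖g s - g x‖ ≤ 2 * M * |s - x|} :=
    have := continuous_of_forall_sub_eq_integral hint hftc
    isClosed_le (by fun_prop) (by fun_prop)
  have hmem : s ∈ closure (Ioo (x - R) (x + R)) := by
    rw [closure_Ioo (by linarith)]
    constructor <;> linarith [abs_le.1 hs]
  refine hclosed.closure_subset_iff.2 (fun s hs => hopen s ?_) hmem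
  rw [abs_sub_lt_iff]; constructor <;> linarith [hs.1, hs.2]

end AverageBound

theorem stmt6_general (γ γ' γ'' : ℝ → EuclideanSpace ℝ (Fin 3))
    (hper : Function.Periodic γ (2 * π))
    (hInt' : ∀ a b : ℝ, IntervalIntegrable γ' volume a b)
    (hInt'' : ∀ a b : ℝ, IntervalIntegrable γ'' volume a b)
    (hFTC : ∀ a b : ℝ, γ b - γ a = ∫ x in a..b, γ' x)
    (hFTC' : ∀ a b : ℝ, γ' b - γ' a = ∫ x in a..b, γ'' x)
    (hspeed : ∀ x, ‖γ' x‖ = 1) :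
    ∀ x y M : ℝ,
      (∀ ℓ : ℝ, 0 < ℓ → ℓ < π →
        (1 / (2 * ℓ)) * ∫ z in (x - ℓ)..(x + ℓ), ‖γ'' z‖ ≤ M) →
      vartheta (x - y) ^ 2 - ‖γ x - γ y‖ ^ 2 ≤
        vartheta (x - y) * M * vartheta (x - y) ^ 2 := by
  intro x y M hM
  set k : ℤ := round ((x - y) / (2 * π))
  set w : ℝ := 2 * π * k - (x - y)
  have hdist : vartheta (x - y) = |w| := abs_sub_comm _ _
  have hy : γ y = γ (x + w) := by
    rw [show x + w = y + k * (2 * π) by ring, hper.int_mul k y]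
  have hchord : ‖γ x - γ y‖ = ‖∫ s in x..x + w, γ' s‖ := by
    rw [hy, ← hFTC, norm_sub_rev]
  have hlip : ∀ s, |s - x| ≤ π → ‖γ' s - γ' x‖ ≤ 2 * M * |s - x| := fun s hs =>
    norm_sub_le_of_average_norm_le hInt'' hFTC' hM hs
  have hM0 : 0 ≤ M := by
    have := hlip (x + π) (by rw [add_sub_cancel_left, abs_of_pos pi_pos])
    rw [add_sub_cancel_left, abs_of_pos pi_pos] at this
    nlinarith [norm_nonneg (γ' (x + π) - γ' x), pi_pos]
  have hbound := sq_sub_norm_integral_sq_le_of_norm_sub_le (by positivity) (hInt' x (x + w))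
    (fun s _ => hspeed s) fun s hs => hlip s <| (abs_sub_left_of_mem_uIcc hs).trans <| by
      simpa [← hdist] using vartheta_le_pi (x - y)
  rw [hdist, hchord]
  calc |w| ^ 2 - ‖∫ s in x..x + w, γ' s‖ ^ 2 = w ^ 2 - ‖∫ s in x..x + w, γ' s‖ ^ 2 := by
        rw [sq_abs]
    _ ≤ 2 * M * |w| ^ 3 / 2 := hbound
    _ = |w| * M * |w| ^ 2 := by ring

/-- Let `γ ∈ H²(𝕋¹;ℝ³)` have unit speed, and let `κ*_γ(x)` be the curvature maximal
function `sup_{0<ℓ<π}(1/2ℓ)∫_{x-ℓ}^{x+ℓ}|γ''|`.  With `δ(x,y)` defined by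
`|γ(x)-γ(y)|² = (1-δ(x,y))ϑ(x-y)²`, one has `δ(x,y) ≤ ϑ(x-y)·κ*_γ(x)`; equivalently,
for any `M` bounding all the averages `(1/2ℓ)∫_{x-ℓ}^{x+ℓ}|γ''|` with `0 < ℓ < π`,
`ϑ(x-y)² - |γ(x)-γ(y)|² ≤ ϑ(x-y)·M·ϑ(x-y)²`. -/
theorem stmt6 (γ γ' γ'' : ℝ → EuclideanSpace ℝ (Fin 3))
    (hper : Function.Periodic γ (2 * π))
    (hper' : Function.Periodic γ' (2 * π))
    (hper'' : Function.Periodic γ'' (2 * π))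
    (hInt' : ∀ a b : ℝ, IntervalIntegrable γ' volume a b)
    (hInt'' : ∀ a b : ℝ, IntervalIntegrable γ'' volume a b)
    (hFTC : ∀ a b : ℝ, γ b - γ a = ∫ x in a..b, γ' x)
    (hFTC' : ∀ a b : ℝ, γ' b - γ' a = ∫ x in a..b, γ'' x)
    (hL2 : MemLp γ'' 2 (volume.restrict (Set.Ioc (-π) π)))
    (hspeed : ∀ x, ‖γ' x‖ = 1) :
    ∀ x y M : ℝ,
      (∀ ℓ : ℝ, 0 < ℓ → ℓ < π →
        (1 / (2 * ℓ)) * ∫ z in (x - ℓ)..(x + ℓ), ‖γ'' z‖ ≤ M) →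
      vartheta (x - y) ^ 2 - ‖γ x - γ y‖ ^ 2 ≤
        vartheta (x - y) * M * vartheta (x - y) ^ 2 :=
  stmt6_general γ γ' γ'' hper hInt' hInt'' hFTC hFTC' hspeed
end

section
/- For 0 ≤ p < 1/2 and γ ∈ H²(𝕋¹; ℝ³), the principal value operator L_p[γ](x) := p.v. ∫_{𝕋¹} (γ(x)-γ(y))/ϑ(x-y)^{2(p+1)} dy acts diagonally on Fourier coefficients via γ̂_k ↦ λ_k γ̂_k with λ_k = C_{p,k}|k|^{1+2p}, where 0 < C_{k,p} = O(1) as |k| → ∞; consequently ‖L_p[γ]‖_{Ḣ^{1-2p}(𝕋¹)} ≤ C_p ‖γ‖_{Ḣ²(𝕋¹)}. -/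
/-!
After the substitution `y = x - z` and periodicity, the `ε`-truncated operator is
`x ↦ ∫ K_ε(z) (γ(x) - γ(x - z)) dz` with the even kernel `K_ε(z) = |z|^{-2(p+1)} 1_{|z| ≥ ε}`.
Fubini and the shift rule `(γ(· - z))^_k = e^{-ikz} γ̂_k` make it a Fourier multiplier with symbol
`∫ K_ε(z) (1 - cos kz) dz`, which tends to `λ_k = ∫ |z|^{-2(p+1)} (1 - cos kz) dz` by dominated
convergence: `1 - cos x ≤ x²/2` dominates the integrand by `k²|z|^{-2p}/2`, integrable as `p < 1/2`.
Splitting `λ_k` at `|z| = 1/|k|` gives `λ_k ≤ (1/(1-2p) + 4/(1+2p)) |k|^{1+2p}`, so the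
`Ḣ^{1-2p}` weights of `λ_k γ̂_k` are bounded termwise by the `Ḣ²` weights of `γ̂_k`.
-/

open MeasureTheory Real Filter

/-- Fourier coefficient of a `2π`-periodic function on the torus. -/
noncomputable def fc (f : ℝ → ℂ) (k : ℤ) : ℂ :=
  (1 / (2 * π)) * ∫ x in (-π)..π, f x * Complex.exp (-Complex.I * k * x)

/-- Componentwise Fourier coefficients of an `ℝ³`-valued function. -/
noncomputable def fcE (f : ℝ → EuclideanSpace ℝ (Fin 3)) (k : ℤ) (i : Fin 3) : ℂ :=
  fc (fun x => ((f x i : ℝ) : ℂ)) k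

/-- Truncated version of the principal-value operator
`L_p[γ](x) = p.v.∫_{𝕋¹} (γ(x)-γ(y))/ϑ(x-y)^{2(p+1)} dy`. -/
noncomputable def LpE (p ε : ℝ) (γ : ℝ → EuclideanSpace ℝ (Fin 3)) (x : ℝ) :
    EuclideanSpace ℝ (Fin 3) :=
  ∫ y in (-π)..π,
    if ε ≤ vartheta (x - y) then (vartheta (x - y)) ^ (-(2 * (p + 1))) • (γ x - γ y)
    else 0

open Topology

lemma vartheta_periodic : Function.Periodic vartheta (2 * π) := by
  intro z
  have h : (z + 2 * π) / (2 * π) = z / (2 * π) + (1 : ℤ) := by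
    push_cast; field_simp
  simp only [vartheta, h, round_add_intCast]
  push_cast
  ring_nf

lemma vartheta_eq_abs {z : ℝ} (hz : |z| ≤ π) : vartheta z = |z| := by
  have h2π : (0 : ℝ) < 2 * π := by positivity
  set n := round (z / (2 * π))
  have hscale : vartheta z = 2 * π * |z / (2 * π) - n| := by
    rw [vartheta, ← abs_of_pos h2π, ← abs_mul, abs_of_pos h2π]
    congr 1
    field_simp
    rfl
  refine le_antisymm ?_ ?_
  · calc vartheta z ≤ 2 * π * |z / (2 * π) - (0 : ℤ)| := by
          exact hscale ▸ mul_le_mul_of_nonneg_left (round_le _ 0) h2π.le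
      _ = |z| := by
          rw [Int.cast_zero, sub_zero, abs_div, abs_of_pos h2π]; field_simp
  · rcases eq_or_ne n 0 with hn | hn
    · simp [vartheta, n, hn]
    · have hn1 : (1 : ℝ) ≤ |(n : ℝ)| := by exact_mod_cast Int.one_le_abs hn
      have hshift : 2 * π ≤ |2 * π * (n : ℝ)| := by
        rw [abs_mul, abs_of_pos h2π]; nlinarith
      have htri := abs_sub_abs_le_abs_sub (2 * π * (n : ℝ)) z
      rw [abs_sub_comm] at htri
      unfold vartheta
      linarith

section Periodic

variable {E : Type*} [NormedAddCommGroup E] [NormedSpace ℝ E] {F : ℝ → E}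

lemma Function.Periodic.intervalIntegral_comp_add_right_eq (hF : Periodic F (2 * π)) (c : ℝ) :
    ∫ y in (-π)..π, F (y + c) = ∫ y in (-π)..π, F y := by
  have h := hF.intervalIntegral_add_eq (-π + c) (-π)
  rw [show -π + c + 2 * π = π + c by ring, show -π + 2 * π = π by ring] at h
  rw [intervalIntegral.integral_comp_add_right, h]

lemma Function.Periodic.intervalIntegral_comp_sub_left_eq (hF : Periodic F (2 * π)) (x : ℝ) :
    ∫ y in (-π)..π, F (x - y) = ∫ y in (-π)..π, F y := by
  have h := intervalIntegral.integral_comp_neg (a := -π) (b := π) (fun y => F (y + x))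
  simp only [neg_neg, neg_add_eq_sub] at h
  rw [h, hF.intervalIntegral_comp_add_right_eq]

end Periodic

noncomputable def truncKernel (p ε r : ℝ) : ℝ :=
  if ε ≤ r then r ^ (-(2 * (p + 1))) else 0

lemma truncKernel_nonneg (p ε : ℝ) {r : ℝ} (hr : 0 ≤ r) : 0 ≤ truncKernel p ε r := by
  unfold truncKernel
  split_ifs
  exacts [rpow_nonneg hr _, le_rfl]

lemma truncKernel_le_rpow {p ε : ℝ} (hp : -1 ≤ p) (hε : 0 < ε) (r : ℝ) :
    truncKernel p ε r ≤ ε ^ (-(2 * (p + 1))) := by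
  unfold truncKernel
  split_ifs with h
  · exact rpow_le_rpow_of_nonpos hε h (by linarith)
  · positivity

lemma measurable_truncKernel (p ε : ℝ) : Measurable (truncKernel p ε) :=
  Measurable.ite measurableSet_Ici (measurable_id.pow_const _) measurable_const

lemma intervalIntegrable_truncKernel_abs {p ε : ℝ} (hp : -1 ≤ p) (hε : 0 < ε) (a b : ℝ) :
    IntervalIntegrable (fun z => truncKernel p ε |z|) volume a b := by
  refine (intervalIntegrable_const (c := ε ^ (-(2 * (p + 1))))).mono_fun'
    ((measurable_truncKernel p ε).comp measurable_abs).aestronglyMeasurable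
    (Eventually.of_forall fun z => ?_)
  show ‖truncKernel p ε |z|‖ ≤ _
  rw [norm_of_nonneg (truncKernel_nonneg p ε (abs_nonneg z))]
  exact truncKernel_le_rpow hp hε _

lemma LpE_apply {p ε : ℝ} (hp : -1 ≤ p) (hε : 0 < ε) {γ : ℝ → EuclideanSpace ℝ (Fin 3)}
    (hγ : Continuous γ) (hper : Function.Periodic γ (2 * π)) (x : ℝ) (i : Fin 3) :
    LpE p ε γ x i = ∫ z in (-π)..π, truncKernel p ε |z| * (γ x i - γ (x - z) i) := by
  have hperiodic : Function.Periodic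
      (fun z => truncKernel p ε (vartheta z) • (γ x - γ (x - z))) (2 * π) := fun z => by
    simp only [vartheta_periodic z, sub_add_eq_sub_sub, hper.sub_eq]
  have hLpE : LpE p ε γ x = ∫ z in (-π)..π, truncKernel p ε |z| • (γ x - γ (x - z)) := by
    calc LpE p ε γ x
        = ∫ y in (-π)..π, truncKernel p ε (vartheta (x - y)) • (γ x - γ (x - (x - y))) := by
          simp only [LpE, truncKernel, ite_smul, zero_smul, sub_sub_cancel]
      _ = ∫ z in (-π)..π, truncKernel p ε (vartheta z) • (γ x - γ (x - z)) :=
          hperiodic.intervalIntegral_comp_sub_left_eq x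
      _ = _ := intervalIntegral.integral_congr fun z hz => by
          rw [Set.uIcc_of_le (by linarith [pi_pos])] at hz
          rw [vartheta_eq_abs (abs_le.2 hz)]
  have hint : IntervalIntegrable (fun z => truncKernel p ε |z| • (γ x - γ (x - z)))
      volume (-π) π :=
    (intervalIntegrable_truncKernel_abs hp hε _ _).smul_continuousOn (by fun_prop)
  rw [hLpE]
  simpa only [map_smul, PiLp.proj_apply, PiLp.sub_apply, smul_eq_mul] using
    ((EuclideanSpace.proj i : EuclideanSpace ℝ (Fin 3) →L[ℝ] ℝ).intervalIntegral_comp_comm hint).symm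

lemma periodic_exp_neg_I_mul_intCast (k : ℤ) :
    Function.Periodic (fun x : ℝ => Complex.exp (-Complex.I * k * x)) (2 * π) := fun x => by
  simp only [Complex.ofReal_add, Complex.ofReal_mul, Complex.ofReal_ofNat]
  rw [show -Complex.I * k * (x + 2 * π) = -Complex.I * k * x + (-k : ℤ) * (2 * π * Complex.I) by
    push_cast; ring, Complex.exp_add, Complex.exp_int_mul_two_pi_mul_I, mul_one]

lemma intervalIntegral_mul_exp_eq_fc (f : ℝ → ℂ) (k : ℤ) :
    ∫ x in (-π)..π, f x * Complex.exp (-Complex.I * k * x) = 2 * π * fc f k := by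
  have : (2 * π : ℂ) ≠ 0 := by exact_mod_cast two_pi_pos.ne'
  rw [fc]
  field_simp

lemma fc_comp_sub {f : ℝ → ℂ} (hf : Function.Periodic f (2 * π)) (z : ℝ) (k : ℤ) :
    fc (fun x => f (x - z)) k = Complex.exp (-Complex.I * k * z) * fc f k := by
  have hshift (x : ℝ) : f (x - z) * Complex.exp (-Complex.I * k * x)
      = Complex.exp (-Complex.I * k * z) * (f (x - z) * Complex.exp (-Complex.I * k * ↑(x - z))) := by
    rw [mul_left_comm, ← Complex.exp_add]
    push_cast
    ring_nf
  have hper : Function.Periodic (fun x => f x * Complex.exp (-Complex.I * k * x)) (2 * π) :=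
    hf.mul (periodic_exp_neg_I_mul_intCast k)
  have htrans := hper.intervalIntegral_comp_add_right_eq (-z)
  simp only [← sub_eq_add_neg] at htrans
  rw [fc, intervalIntegral.integral_congr fun x _ => hshift x, intervalIntegral.integral_const_mul,
    htrans, fc]
  ring

theorem fc_integral_mul_sub_comp_sub {K f : ℝ → ℂ} (hK : IntervalIntegrable K volume (-π) π)
    (hfc : Continuous f) (hfp : Function.Periodic f (2 * π)) (k : ℤ) :
    fc (fun x => ∫ z in (-π)..π, K z * (f x - f (x - z))) k
      = (∫ z in (-π)..π, K z * (1 - Complex.exp (-Complex.I * k * z))) * fc f k := by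
  set e : ℝ → ℂ := fun x => Complex.exp (-Complex.I * k * x)
  have hππ : -π ≤ π := by linarith [pi_pos]
  have hinner (z : ℝ) : ∫ x in (-π)..π, K z * (f x - f (x - z)) * e x
      = 2 * π * (K z * (1 - e z) * fc f k) := by
    simp only [mul_sub, sub_mul, mul_assoc]
    rw [intervalIntegral.integral_sub, intervalIntegral.integral_const_mul,
      intervalIntegral.integral_const_mul, intervalIntegral_mul_exp_eq_fc,
      intervalIntegral_mul_exp_eq_fc (fun x => f (x - z)), fc_comp_sub hfp]
    · ring
    all_goals exact (Continuous.intervalIntegrable (by fun_prop) _ _).const_mul _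
  obtain ⟨M, hM⟩ := isBounded_iff_forall_norm_le.1
    (hfp.isBounded_of_continuous two_pi_pos.ne' hfc)
  have hint : Integrable (Function.uncurry fun x z => K z * (f x - f (x - z)) * e x)
      ((volume.restrict (Set.Ioc (-π) π)).prod (volume.restrict (Set.Ioc (-π) π))) := by
    have hK' : Integrable K (volume.restrict (Set.Ioc (-π) π)) :=
      (intervalIntegrable_iff_integrableOn_Ioc_of_le hππ).1 hK
    refine ((hK'.norm.comp_snd _).const_mul (2 * M)).mono' ?_ (Eventually.of_forall fun q => ?_)
    · exact (hK'.1.comp_snd).mul (Continuous.aestronglyMeasurable (by fun_prop)) |>.mul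
        (Continuous.aestronglyMeasurable (by fun_prop))
    · have he : ‖e q.1‖ = 1 := by simp [e, Complex.norm_exp]
      have hf2 : ‖f q.1 - f (q.1 - q.2)‖ ≤ 2 * M := by
        linarith [norm_sub_le (f q.1) (f (q.1 - q.2)), hM _ ⟨q.1, rfl⟩, hM _ ⟨q.1 - q.2, rfl⟩]
      show ‖K q.2 * (f q.1 - f (q.1 - q.2)) * e q.1‖ ≤ 2 * M * ‖K q.2‖
      rw [norm_mul, norm_mul, he, mul_one, mul_comm]
      exact mul_le_mul_of_nonneg_right hf2 (norm_nonneg _)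
  have hswap : ∫ x in (-π)..π, (∫ z in (-π)..π, K z * (f x - f (x - z))) * e x
      = ∫ z in (-π)..π, ∫ x in (-π)..π, K z * (f x - f (x - z)) * e x := by
    simp only [intervalIntegral.integral_of_le hππ, ← integral_mul_const]
    exact integral_integral_swap hint
  rw [fc, hswap, intervalIntegral.integral_congr fun z _ => hinner z,
    intervalIntegral.integral_const_mul, intervalIntegral.integral_mul_const, ← mul_assoc,
    one_div_mul_cancel (by exact_mod_cast two_pi_pos.ne'), one_mul]

lemma IntervalIntegrable.ofReal {μ : Measure ℝ} {f : ℝ → ℝ} {a b : ℝ}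
    (hf : IntervalIntegrable f μ a b) : IntervalIntegrable (fun x => (f x : ℂ)) μ a b :=
  ⟨hf.1.ofReal, hf.2.ofReal⟩

lemma intervalIntegral_eq_zero_of_odd {g : ℝ → ℝ} (hg : ∀ z, g (-z) = -g z) (a : ℝ) :
    ∫ z in (-a)..a, g z = 0 := by
  have h := intervalIntegral.integral_comp_neg (a := -a) (b := a) g
  simp only [hg, intervalIntegral.integral_neg, neg_neg] at h
  linarith

lemma intervalIntegral_eq_two_mul_of_even {g : ℝ → ℝ} (hg : ∀ z, g (-z) = g z) {a : ℝ}
    (hgi : IntervalIntegrable g volume (-a) a) :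
    ∫ z in (-a)..a, g z = 2 * ∫ z in (0 : ℝ)..a, g z := by
  have hneg := intervalIntegral.integral_comp_neg (a := 0) (b := a) g
  simp only [hg, neg_zero] at hneg
  have h0 : (0 : ℝ) ∈ Set.uIcc (-a) a := by
    rw [Set.mem_uIcc]
    rcases le_total 0 a with h | h <;> [left; right] <;> constructor <;> linarith
  rw [← intervalIntegral.integral_add_adjacent_intervals
    (hgi.mono_set (Set.uIcc_subset_uIcc_left h0)) (hgi.mono_set (Set.uIcc_subset_uIcc_right h0)),
    ← hneg]
  ring

lemma intervalIntegral_mul_one_sub_exp_of_even {K : ℝ → ℝ} (hK : ∀ z, K (-z) = K z) {a : ℝ}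
    (hKi : IntervalIntegrable K volume (-a) a) (k : ℤ) :
    ∫ z in (-a)..a, (K z : ℂ) * (1 - Complex.exp (-Complex.I * k * z))
      = ((∫ z in (-a)..a, K z * (1 - cos (k * z)) : ℝ) : ℂ) := by
  have hpt (z : ℝ) : (K z : ℂ) * (1 - Complex.exp (-Complex.I * k * z))
      = ((K z * (1 - cos (k * z)) : ℝ) : ℂ) + ((K z * sin (k * z) : ℝ) : ℂ) * Complex.I := by
    rw [show -Complex.I * k * z = ((-(k * z) : ℝ) : ℂ) * Complex.I by push_cast; ring,
      Complex.exp_mul_I, ← Complex.ofReal_cos, ← Complex.ofReal_sin, cos_neg, sin_neg]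
    push_cast
    ring
  have hodd : ∫ z in (-a)..a, K z * sin (k * z) = 0 :=
    intervalIntegral_eq_zero_of_odd (fun z => by rw [hK, mul_neg, sin_neg, mul_neg]) a
  have hint (g : ℝ → ℝ) (hg : Continuous g) :
      IntervalIntegrable (fun z => ((K z * g z : ℝ) : ℂ)) volume (-a) a :=
    (hKi.mul_continuousOn hg.continuousOn).ofReal
  rw [intervalIntegral.integral_congr fun z _ => hpt z, intervalIntegral.integral_add
    (hint _ (by fun_prop)) ((hint _ (by fun_prop)).mul_const _), intervalIntegral.integral_mul_const,
    intervalIntegral.integral_ofReal, intervalIntegral.integral_ofReal, hodd]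
  simp

/-- `symbol p k` is the paper's `λ_k`, and `truncSymbol p ε k` the Fourier multiplier of the
truncated operator `LpE p ε`. -/
noncomputable def symbol (p : ℝ) (k : ℤ) : ℝ :=
  ∫ z in (-π)..π, |z| ^ (-(2 * (p + 1))) * (1 - cos (k * z))

noncomputable def truncSymbol (p ε : ℝ) (k : ℤ) : ℝ :=
  ∫ z in (-π)..π, truncKernel p ε |z| * (1 - cos (k * z))

lemma fcE_LpE {p ε : ℝ} (hp : -1 ≤ p) (hε : 0 < ε) {γ : ℝ → EuclideanSpace ℝ (Fin 3)}
    (hγ : Continuous γ) (hper : Function.Periodic γ (2 * π)) (k : ℤ) (i : Fin 3) :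
    fcE (LpE p ε γ) k i = truncSymbol p ε k * fcE γ k i := by
  have hK := intervalIntegrable_truncKernel_abs hp hε (-π) π
  have hLpE : (fun x => ((LpE p ε γ x i : ℝ) : ℂ)) = fun x =>
      ∫ z in (-π)..π, (truncKernel p ε |z| : ℂ) * ((γ x i : ℂ) - (γ (x - z) i : ℂ)) := by
    ext x
    rw [LpE_apply hp hε hγ hper, ← intervalIntegral.integral_ofReal]
    push_cast
    rfl
  have hmult := fc_integral_mul_sub_comp_sub (f := fun x => ((γ x i : ℝ) : ℂ))
      (K := fun z => ((truncKernel p ε |z| : ℝ) : ℂ)) hK.ofReal (by fun_prop)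
      (fun x => by simp only [hper x]) k
  rw [fcE, hLpE, hmult,
    intervalIntegral_mul_one_sub_exp_of_even (fun z => by rw [abs_neg]) hK, fcE, truncSymbol]

lemma intervalIntegrable_abs_rpow {r : ℝ} (hr : -1 < r) (a b : ℝ) :
    IntervalIntegrable (fun z => |z| ^ r) volume a b := by
  refine intervalIntegrable_of_even (fun x => by rw [abs_neg]) (fun x hx => ?_)
  refine (intervalIntegral.intervalIntegrable_rpow' hr).congr fun z hz => ?_
  rw [Set.uIoc_of_le hx.le] at hz
  simp only [abs_of_pos hz.1]

lemma rpow_abs_mul_one_sub_cos_nonneg (p k z : ℝ) :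
    0 ≤ |z| ^ (-(2 * (p + 1))) * (1 - cos (k * z)) := by
  have := cos_le_one (k * z)
  positivity

lemma rpow_abs_mul_one_sub_cos_le (p k z : ℝ) :
    |z| ^ (-(2 * (p + 1))) * (1 - cos (k * z)) ≤ k ^ 2 / 2 * |z| ^ (-(2 * p)) := by
  rcases eq_or_ne z 0 with rfl | hz
  · simp only [abs_zero, mul_zero, cos_zero, sub_self]
    positivity
  · have h1 : 1 - cos (k * z) ≤ (k * z) ^ 2 / 2 := by
      linarith [one_sub_sq_div_two_le_cos (x := k * z)]
    calc |z| ^ (-(2 * (p + 1))) * (1 - cos (k * z))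
        ≤ |z| ^ (-(2 * (p + 1))) * ((k * z) ^ 2 / 2) := by gcongr
      _ = k ^ 2 / 2 * (|z| ^ (-(2 * (p + 1))) * |z| ^ (2 : ℝ)) := by
          rw [rpow_two, sq_abs]; ring
      _ = k ^ 2 / 2 * |z| ^ (-(2 * p)) := by
          rw [← rpow_add (abs_pos.2 hz)]; ring_nf

lemma intervalIntegrable_rpow_abs_mul_one_sub_cos {p : ℝ} (hp : p < 1 / 2) (k a b : ℝ) :
    IntervalIntegrable (fun z => |z| ^ (-(2 * (p + 1))) * (1 - cos (k * z))) volume a b := by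
  refine ((intervalIntegrable_abs_rpow (r := -(2 * p)) (by linarith) a b).const_mul
    (k ^ 2 / 2)).mono_fun' (by fun_prop) (Eventually.of_forall fun z => ?_)
  dsimp only
  rw [norm_of_nonneg (rpow_abs_mul_one_sub_cos_nonneg p k z)]
  exact rpow_abs_mul_one_sub_cos_le p k z

lemma truncKernel_abs_mul_one_sub_cos_le (p ε k z : ℝ) :
    ‖truncKernel p ε |z| * (1 - cos (k * z))‖ ≤ |z| ^ (-(2 * (p + 1))) * (1 - cos (k * z)) := by
  have h := rpow_abs_mul_one_sub_cos_nonneg p k z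
  unfold truncKernel
  split_ifs
  · rw [norm_of_nonneg h]
  · rwa [zero_mul, norm_zero]

lemma tendsto_truncSymbol {p : ℝ} (hp : p < 1 / 2) (k : ℤ) :
    Tendsto (fun ε => truncSymbol p ε k) (𝓝[>] 0) (𝓝 (symbol p k)) := by
  refine intervalIntegral.tendsto_integral_filter_of_dominated_convergence _
    (Eventually.of_forall fun ε => ?_)
    (Eventually.of_forall fun ε => Eventually.of_forall fun z _ =>
      truncKernel_abs_mul_one_sub_cos_le p ε k z)
    (intervalIntegrable_rpow_abs_mul_one_sub_cos hp k _ _) ?_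
  · exact (((measurable_truncKernel p ε).comp measurable_abs).mul
      (by fun_prop)).aestronglyMeasurable
  · filter_upwards [Measure.ae_ne volume 0] with z hz _
    refine tendsto_const_nhds.congr' ?_
    filter_upwards [Ioo_mem_nhdsGT (abs_pos.2 hz)] with ε hε
    rw [truncKernel, if_pos hε.2.le]

lemma symbol_nonneg (p : ℝ) (k : ℤ) : 0 ≤ symbol p k :=
  intervalIntegral.integral_nonneg (by linarith [pi_pos]) fun z _ =>
    rpow_abs_mul_one_sub_cos_nonneg p k z

lemma symbol_eq_two_mul {p : ℝ} (hp : p < 1 / 2) (k : ℤ) :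
    symbol p k = 2 * ∫ z in (0 : ℝ)..π, |z| ^ (-(2 * (p + 1))) * (1 - cos (k * z)) :=
  intervalIntegral_eq_two_mul_of_even (fun z => by rw [abs_neg, mul_neg, cos_neg])
    (intervalIntegrable_rpow_abs_mul_one_sub_cos hp k _ _)

lemma symbol_pos {p : ℝ} (hp : p < 1 / 2) {k : ℤ} (hk : k ≠ 0) : 0 < symbol p k := by
  have hk1 : (1 : ℝ) ≤ |(k : ℝ)| := by exact_mod_cast Int.one_le_abs hk
  have hδπ : |(k : ℝ)|⁻¹ ≤ π := by
    linarith [inv_le_one_of_one_le₀ hk1, pi_gt_three]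
  have hint := intervalIntegrable_rpow_abs_mul_one_sub_cos hp k 0 π
  have hpos : 0 < ∫ z in (0 : ℝ)..|(k : ℝ)|⁻¹, |z| ^ (-(2 * (p + 1))) * (1 - cos (k * z)) := by
    refine intervalIntegral.intervalIntegral_pos_of_pos_on
      (intervalIntegrable_rpow_abs_mul_one_sub_cos hp k _ _) (fun z hz => ?_) (by positivity)
    have hkz : |(k : ℝ) * z| < 1 := by
      rw [abs_mul, abs_of_pos hz.1]
      calc |(k : ℝ)| * z < |(k : ℝ)| * |(k : ℝ)|⁻¹ := by gcongr; exact hz.2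
        _ = 1 := mul_inv_cancel₀ (by positivity)
    have hcos : cos (k * z) ≠ 1 := by
      rw [Ne, cos_eq_one_iff_of_lt_of_lt (by linarith [abs_lt.1 hkz, pi_gt_three])
        (by linarith [abs_lt.1 hkz, pi_gt_three])]
      exact mul_ne_zero (by exact_mod_cast hk) hz.1.ne'
    exact mul_pos (rpow_pos_of_pos (abs_pos.2 hz.1.ne') _)
      (sub_pos.2 ((cos_le_one _).lt_of_ne hcos))
  rw [symbol_eq_two_mul hp]
  have hmono := intervalIntegral.integral_mono_interval le_rfl (by positivity) hδπ
    (Eventually.of_forall fun z => rpow_abs_mul_one_sub_cos_nonneg p k z) hint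
  linarith

lemma integral_rpow_abs_mul_one_sub_cos_le_near_zero {p : ℝ} (hp : p < 1 / 2) (k : ℝ) {δ : ℝ}
    (hδ : 0 ≤ δ) :
    ∫ z in (0 : ℝ)..δ, |z| ^ (-(2 * (p + 1))) * (1 - cos (k * z))
      ≤ k ^ 2 / 2 * (δ ^ (1 - 2 * p) / (1 - 2 * p)) := by
  calc ∫ z in (0 : ℝ)..δ, |z| ^ (-(2 * (p + 1))) * (1 - cos (k * z))
      ≤ ∫ z in (0 : ℝ)..δ, k ^ 2 / 2 * z ^ (-(2 * p)) := by
        refine intervalIntegral.integral_mono_on hδ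
          (intervalIntegrable_rpow_abs_mul_one_sub_cos hp k _ _)
          ((intervalIntegral.intervalIntegrable_rpow' (by linarith)).const_mul _) fun z hz => ?_
        simpa only [abs_of_nonneg hz.1] using rpow_abs_mul_one_sub_cos_le p k z
    _ = k ^ 2 / 2 * (δ ^ (1 - 2 * p) / (1 - 2 * p)) := by
        rw [intervalIntegral.integral_const_mul, integral_rpow (Or.inl (by linarith)),
          zero_rpow (by linarith), show -(2 * p) + 1 = 1 - 2 * p by ring, sub_zero]

lemma integral_rpow_abs_mul_one_sub_cos_le_away_from_zero {p : ℝ} (hp : -1 / 2 < p) (k : ℝ)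
    {δ b : ℝ} (hδ : 0 < δ) (hδb : δ ≤ b) :
    ∫ z in δ..b, |z| ^ (-(2 * (p + 1))) * (1 - cos (k * z))
      ≤ 2 * (δ ^ (-(1 + 2 * p)) / (1 + 2 * p)) := by
  have h0 : (0 : ℝ) ∉ Set.uIcc δ b := by
    rw [Set.uIcc_of_le hδb]; exact fun h => hδ.not_ge h.1
  calc ∫ z in δ..b, |z| ^ (-(2 * (p + 1))) * (1 - cos (k * z))
      ≤ ∫ z in δ..b, 2 * z ^ (-(2 * (p + 1))) := by
        have hcont : ContinuousOn (fun z => |z| ^ (-(2 * (p + 1))) * (1 - cos (k * z)))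
            (Set.uIcc δ b) :=
          (continuous_abs.continuousOn.rpow_const fun z hz =>
            Or.inl (abs_ne_zero.2 (ne_of_mem_of_not_mem hz h0))).mul (by fun_prop)
        refine intervalIntegral.integral_mono_on hδb hcont.intervalIntegrable
          ((intervalIntegral.intervalIntegrable_rpow (Or.inr h0)).const_mul _) fun z hz => ?_
        rw [abs_of_pos (hδ.trans_le hz.1), mul_comm]
        exact mul_le_mul_of_nonneg_right (by linarith [neg_one_le_cos (k * z)])
          (rpow_nonneg (hδ.le.trans hz.1) _)
    _ = 2 * ((δ ^ (-(1 + 2 * p)) - b ^ (-(1 + 2 * p))) / (1 + 2 * p)) := by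
        rw [intervalIntegral.integral_const_mul, integral_rpow (Or.inr ⟨by linarith, h0⟩),
          show -(2 * (p + 1)) + 1 = -(1 + 2 * p) by ring, div_neg, ← neg_div, neg_sub]
    _ ≤ 2 * (δ ^ (-(1 + 2 * p)) / (1 + 2 * p)) := by
        have : 0 ≤ b ^ (-(1 + 2 * p)) := rpow_nonneg (hδ.le.trans hδb) _
        gcongr
        · linarith
        · linarith

/-- Split at `|z| = 1/|k|`: near zero use `1 - cos x ≤ x²/2`, away from zero use `1 - cos x ≤ 2`. -/
lemma symbol_le {p : ℝ} (hp₁ : -1 / 2 < p) (hp₂ : p < 1 / 2) (k : ℤ) :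
    symbol p k ≤ (1 / (1 - 2 * p) + 4 / (1 + 2 * p)) * |(k : ℝ)| ^ (1 + 2 * p) := by
  have hB : 0 ≤ 1 / (1 - 2 * p) + 4 / (1 + 2 * p) :=
    add_nonneg (div_nonneg zero_le_one (by linarith)) (div_nonneg zero_le_four (by linarith))
  rcases eq_or_ne k 0 with rfl | hk
  · simp only [symbol, Int.cast_zero, zero_mul, cos_zero, sub_self, mul_zero,
      intervalIntegral.integral_zero]
    exact mul_nonneg hB (rpow_nonneg (abs_nonneg _) _)
  have hk1 : (1 : ℝ) ≤ |(k : ℝ)| := by exact_mod_cast Int.one_le_abs hk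
  have hkpos : (0 : ℝ) < |(k : ℝ)| := by linarith
  set δ := |(k : ℝ)|⁻¹ with hδ
  have hδπ : δ ≤ π := by linarith [inv_le_one_of_one_le₀ hk1, pi_gt_three]
  have hnear : (k : ℝ) ^ 2 * δ ^ (1 - 2 * p) = |(k : ℝ)| ^ (1 + 2 * p) := by
    rw [hδ, inv_rpow hkpos.le, ← rpow_neg hkpos.le, ← sq_abs, ← rpow_natCast,
      ← rpow_add hkpos]
    congr 1
    push_cast
    ring
  have haway : δ ^ (-(1 + 2 * p)) = |(k : ℝ)| ^ (1 + 2 * p) := by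
    rw [hδ, inv_rpow hkpos.le, ← rpow_neg hkpos.le, neg_neg]
  rw [symbol_eq_two_mul hp₂, ← intervalIntegral.integral_add_adjacent_intervals
    (intervalIntegrable_rpow_abs_mul_one_sub_cos hp₂ k 0 δ)
    (intervalIntegrable_rpow_abs_mul_one_sub_cos hp₂ k δ π)]
  have h₁ := integral_rpow_abs_mul_one_sub_cos_le_near_zero hp₂ k (by positivity : 0 ≤ δ)
  have h₂ := integral_rpow_abs_mul_one_sub_cos_le_away_from_zero hp₁ k
    (by positivity : 0 < δ) hδπ
  calc _ ≤ 2 * (k ^ 2 / 2 * (δ ^ (1 - 2 * p) / (1 - 2 * p))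
        + 2 * (δ ^ (-(1 + 2 * p)) / (1 + 2 * p))) := by gcongr
    _ = 1 / (1 - 2 * p) * ((k : ℝ) ^ 2 * δ ^ (1 - 2 * p))
        + 4 / (1 + 2 * p) * δ ^ (-(1 + 2 * p)) := by ring
    _ = _ := by rw [hnear, haway]; ring

lemma continuous_of_sub_eq_intervalIntegral {E : Type*} [NormedAddCommGroup E] [NormedSpace ℝ E]
    {γ γ' : ℝ → E} (hγ' : ∀ a b, IntervalIntegrable γ' volume a b)
    (hFTC : ∀ a b, γ b - γ a = ∫ x in a..b, γ' x) : Continuous γ := by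
  have : γ = fun b => γ 0 + ∫ x in (0 : ℝ)..b, γ' x := funext fun b => by
    rw [← hFTC 0 b, add_sub_cancel]
  rw [this]
  exact continuous_const.add (intervalIntegral.continuous_primitive hγ' 0)

lemma rpow_mul_sum_norm_sq_le {ι : Type*} (s : Finset ι) (c : ι → ℂ) {a l B p : ℝ} (ha : 0 ≤ a)
    (hl₀ : 0 ≤ l) (hl : l ≤ B * a ^ (1 + 2 * p)) :
    a ^ (2 * (1 - 2 * p)) * ∑ i ∈ s, ‖(l : ℂ) * c i‖ ^ 2 ≤ B ^ 2 * (a ^ 4 * ∑ i ∈ s, ‖c i‖ ^ 2) := by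
  have hexp : a ^ (2 * (1 - 2 * p)) * (a ^ (1 + 2 * p)) ^ 2 = a ^ 4 := by
    have h4 : 2 * (1 - 2 * p) + (1 + 2 * p) * ((2 : ℕ) : ℝ) = ((4 : ℕ) : ℝ) := by push_cast; ring
    rw [← rpow_natCast _ 2, ← rpow_mul ha, ← rpow_add' ha (by rw [h4]; norm_num), h4,
      rpow_natCast]
  simp only [norm_mul, Complex.norm_real, norm_of_nonneg hl₀, mul_pow, ← Finset.mul_sum]
  calc a ^ (2 * (1 - 2 * p)) * (l ^ 2 * ∑ i ∈ s, ‖c i‖ ^ 2)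
      ≤ a ^ (2 * (1 - 2 * p)) * ((B * a ^ (1 + 2 * p)) ^ 2 * ∑ i ∈ s, ‖c i‖ ^ 2) := by gcongr
    _ = B ^ 2 * (a ^ 4 * ∑ i ∈ s, ‖c i‖ ^ 2) := by rw [← hexp]; ring

/-- For `0 ≤ p < 1/2` and `γ ∈ H²(𝕋¹;ℝ³)`, the principal value operator `L_p` acts
diagonally on Fourier coefficients, `γ̂_k ↦ λ_k γ̂_k`, where `λ_k = C_{p,k}|k|^{1+2p}` with
`0 < C_{p,k} = O(1)`; consequently `‖L_p[γ]‖_{Ḣ^{1-2p}} ≤ C_p ‖γ‖_{Ḣ²}`. -/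
theorem stmt7 (p : ℝ) (hp0 : 0 ≤ p) (hp : p < 1 / 2) :
    ∃ (lam : ℤ → ℝ) (B Cp : ℝ), 0 < B ∧ 0 < Cp ∧
      (∀ k : ℤ, k ≠ 0 → 0 < lam k ∧ lam k ≤ B * |(k : ℝ)| ^ (1 + 2 * p)) ∧
      ∀ (γ γ' γ'' : ℝ → EuclideanSpace ℝ (Fin 3)),
        Function.Periodic γ (2 * π) →
        Function.Periodic γ' (2 * π) →
        Function.Periodic γ'' (2 * π) →
        (∀ a b : ℝ, IntervalIntegrable γ' volume a b) →
        (∀ a b : ℝ, IntervalIntegrable γ'' volume a b) →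
        (∀ a b : ℝ, γ b - γ a = ∫ x in a..b, γ' x) →
        (∀ a b : ℝ, γ' b - γ' a = ∫ x in a..b, γ'' x) →
        MemLp γ'' 2 (volume.restrict (Set.Ioc (-π) π)) →
        Summable (fun k : ℤ => |(k : ℝ)| ^ 4 * ∑ i, ‖fcE γ k i‖ ^ 2) →
        (∀ k : ℤ, ∀ i : Fin 3,
          Tendsto (fun ε : ℝ => fcE (LpE p ε γ) k i) (nhdsWithin 0 (Set.Ioi 0))
            (nhds ((lam k : ℂ) * fcE γ k i))) ∧
        Summable (fun k : ℤ =>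
          |(k : ℝ)| ^ (2 * (1 - 2 * p)) * ∑ i, ‖(lam k : ℂ) * fcE γ k i‖ ^ 2) ∧
        (∑' k : ℤ, |(k : ℝ)| ^ (2 * (1 - 2 * p)) * ∑ i, ‖(lam k : ℂ) * fcE γ k i‖ ^ 2) ≤
          Cp ^ 2 * ∑' k : ℤ, |(k : ℝ)| ^ 4 * ∑ i, ‖fcE γ k i‖ ^ 2 := by
  have hp₁ : -1 / 2 < p := by linarith
  set B := 1 / (1 - 2 * p) + 4 / (1 + 2 * p)
  have hB : 0 < B := add_pos (div_pos one_pos (by linarith)) (div_pos four_pos (by linarith))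
  refine ⟨symbol p, B, B, hB, hB, fun k hk => ⟨symbol_pos hp hk, symbol_le hp₁ hp k⟩, ?_⟩
  intro γ γ' γ'' hper _ _ hγ' _ hFTC _ _ hsum
  have hγ := continuous_of_sub_eq_intervalIntegral hγ' hFTC
  have hterm (k : ℤ) := rpow_mul_sum_norm_sq_le Finset.univ (fcE γ k) (abs_nonneg (k : ℝ))
    (symbol_nonneg p k) (symbol_le hp₁ hp k)
  have hsummable := (hsum.mul_left (B ^ 2)).of_nonneg_of_le (fun k => by positivity) hterm
  refine ⟨fun k i => ?_, hsummable,
    (hsummable.tsum_le_tsum hterm (hsum.mul_left _)).trans_eq tsum_mul_left⟩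
  refine (((Complex.continuous_ofReal.tendsto _).comp (tendsto_truncSymbol hp k)).mul_const
    (fcE γ k i)).congr' ?_
  filter_upwards [self_mem_nhdsWithin] with ε hε
  exact (fcE_LpE (by linarith) hε hγ hper k i).symm
end

section
/- Let τ: 𝕋¹ → ℝ³ be a continuous unit tangent field (|τ| ≡ 1) with induced unit-speed curve γ_τ, and let A_τ := Id - (1/2π)∫_{𝕋¹} τ⊗τ dx. Then the minimal eigenvalue of A_τ satisfies λ_min(A_τ) ≥ δ_∞(γ_τ)^{-2}/2, and consequently ‖A_τ^{-1}‖_op ≤ 2δ_∞(γ_τ)². -/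
open MeasureTheory Real

/-- For a unit tangent field `τ`, the action of `A_τ = Id - (1/2π)∫ τ⊗τ`. -/
noncomputable def AmapUnit (τ : ℝ → EuclideanSpace ℝ (Fin 3))
    (v : EuclideanSpace ℝ (Fin 3)) : EuclideanSpace ℝ (Fin 3) :=
  v - (1 / (2 * π)) • ∫ x in (-π)..π, ((inner ℝ (τ x) v : ℝ)) • τ x

/-!
For a unit vector `v`, `⟪v, A_τ v⟫ = (2π)⁻¹ ∫ (1 - ⟪τ, v⟫²)` is the mean square of the component
of `τ` orthogonal to `v`. By the one-dimensional Borsuk–Ulam theorem there are antipodal points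
`x₀`, `x₀ + π` with `⟪γ (x₀ + π) - γ x₀, v⟫ = 0`. On each of the two half-circles the chord
`±(γ (x₀ + π) - γ x₀) =: ±d` is then the integral of the orthogonal component of `τ`, so
Cauchy–Schwarz gives `‖d‖² ≤ π ∫ (1 - ⟪τ, v⟫²)` over that half; adding the halves,
`‖d‖² ≤ π² ⟪v, A_τ v⟫`. The distortion bound at antipodal points gives `π ≤ δ ‖d‖`, hence
`⟪v, A_τ v⟫ ≥ δ⁻²`, and this coercivity bounds `A_τ⁻¹`.
-/

open scoped InnerProductSpace

lemma vartheta_pi : vartheta π = π := by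
  have h : π / (2 * π) = 1 / 2 := by field_simp
  rw [vartheta, h, round_eq, add_halves, Int.floor_one, Int.cast_one, mul_one,
    show π - 2 * π = -π by ring, abs_neg, abs_of_pos pi_pos]

lemma Function.Periodic.exists_apply_add_half_eq {f : ℝ → ℝ} {T : ℝ} (hf : Continuous f)
    (hper : Function.Periodic f (2 * T)) : ∃ x, f (x + T) = f x := by
  set g : ℝ → ℝ := fun x ↦ f (x + T) - f x
  have hg : Continuous g := (hf.comp (continuous_add_const T)).sub hf
  have hanti : g T = -g 0 := by
    simp only [g, ← two_mul, zero_add, hper.eq]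
    ring
  have hzero : (0 : ℝ) ∈ Set.uIcc (g 0) (g T) := by
    rw [hanti, Set.mem_uIcc]
    rcases le_total 0 (g 0) with h | h
    · exact Or.inr ⟨by linarith, h⟩
    · exact Or.inl ⟨h, by linarith⟩
  obtain ⟨x, -, hx⟩ := intermediate_value_uIcc hg.continuousOn hzero
  exact ⟨x, sub_eq_zero.mp hx⟩

section InnerProductSpace

variable {E : Type*} [NormedAddCommGroup E] [InnerProductSpace ℝ E]

lemma norm_sub_inner_smul_sq {v : E} (hv : ‖v‖ = 1) (u : E) :
    ‖u - ⟪u, v⟫_ℝ • v‖ ^ 2 = ‖u‖ ^ 2 - ⟪u, v⟫_ℝ ^ 2 := by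
  rw [norm_sub_sq_real, norm_smul, hv, real_inner_smul_right, real_inner_comm v u, norm_eq_abs,
    mul_one, sq_abs]
  ring

lemma mul_norm_le_norm_apply_of_le_inner_apply {A : E → E}
    (hA : ∀ (c : ℝ) v, A (c • v) = c • A v) {c : ℝ} (h : ∀ v, ‖v‖ = 1 → c ≤ ⟪v, A v⟫_ℝ)
    (w : E) : c * ‖w‖ ≤ ‖A w‖ := by
  rcases eq_or_ne w 0 with rfl | hw
  · simp
  have hw' : 0 < ‖w‖ := norm_pos_iff.mpr hw
  have hunit : ‖‖w‖⁻¹ • w‖ = 1 := by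
    rw [norm_smul, norm_inv, norm_norm, inv_mul_cancel₀ hw'.ne']
  have hc := h _ hunit
  rw [hA, real_inner_smul_left, real_inner_smul_right, ← mul_assoc] at hc
  calc c * ‖w‖ ≤ (‖w‖⁻¹ * ‖w‖⁻¹ * ⟪w, A w⟫_ℝ) * ‖w‖ := by gcongr
    _ = ‖w‖⁻¹ * ⟪w, A w⟫_ℝ := by field_simp
    _ ≤ ‖w‖⁻¹ * (‖w‖ * ‖A w‖) := by gcongr; exact real_inner_le_norm _ _
    _ = ‖A w‖ := by field_simp

lemma continuous_of_forall_sub_eq_intervalIntegral {τ γ : ℝ → E} (hτ : Continuous τ)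
    (hγ : ∀ a b : ℝ, γ b - γ a = ∫ z in a..b, τ z) : Continuous γ := by
  have : γ = fun b ↦ γ 0 + ∫ z in (0 : ℝ)..b, τ z := by
    funext b; rw [← hγ]; abel
  rw [this]
  exact continuous_const.add (intervalIntegral.continuous_primitive
    (fun a b ↦ hτ.intervalIntegrable a b) 0)

variable [CompleteSpace E]

lemma norm_intervalIntegral_sq_le {f : ℝ → E} (hf : Continuous f) {a b : ℝ} (hab : a ≤ b) :
    ‖∫ x in a..b, f x‖ ^ 2 ≤ (b - a) * ∫ x in a..b, ‖f x‖ ^ 2 := by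
  rcases hab.eq_or_lt with rfl | hab
  · simp
  set e := ∫ x in a..b, f x
  set L := b - a
  have hL : 0 < L := sub_pos.mpr hab
  have he : ‖e‖ ^ 2 = ∫ x in a..b, ⟪e, f x⟫_ℝ := by
    have h := (innerSL ℝ e).intervalIntegral_comp_comm (hf.intervalIntegrable (μ := volume) a b)
    simp only [innerSL_apply_apply] at h
    rw [h, real_inner_self_eq_norm_sq]
  -- Cauchy–Schwarz followed by AM-GM: `‖e‖ ‖f x‖ ≤ L/2 ‖f x‖² + ‖e‖²/(2L)`.
  have hpt : ∀ x, ⟪e, f x⟫_ℝ ≤ L / 2 * ‖f x‖ ^ 2 + ‖e‖ ^ 2 / (2 * L) := by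
    intro x
    have : ‖e‖ * ‖f x‖ ≤ L / 2 * ‖f x‖ ^ 2 + ‖e‖ ^ 2 / (2 * L) := by
      rw [← sub_nonneg]
      have : L / 2 * ‖f x‖ ^ 2 + ‖e‖ ^ 2 / (2 * L) - ‖e‖ * ‖f x‖ =
          (L * ‖f x‖ - ‖e‖) ^ 2 / (2 * L) := by field_simp; ring
      rw [this]; positivity
    exact (real_inner_le_norm _ _).trans this
  have hint : ∫ x in a..b, ⟪e, f x⟫_ℝ ≤ ∫ x in a..b, (L / 2 * ‖f x‖ ^ 2 + ‖e‖ ^ 2 / (2 * L)) :=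
    intervalIntegral.integral_mono_on hab.le ((continuous_const.inner hf).intervalIntegrable a b)
      ((by fun_prop : Continuous _).intervalIntegrable a b) (fun x _ ↦ hpt x)
  rw [← he, intervalIntegral.integral_add
    ((by fun_prop : Continuous fun x ↦ L / 2 * ‖f x‖ ^ 2).intervalIntegrable a b)
    intervalIntegrable_const, intervalIntegral.integral_const_mul, intervalIntegral.integral_const,
    smul_eq_mul] at hint
  have : L * (‖e‖ ^ 2 / (2 * L)) = ‖e‖ ^ 2 / 2 := by field_simp
  linarith

lemma norm_intervalIntegral_sq_le_of_inner_eq_zero {τ : ℝ → E} (hcont : Continuous τ)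
    (hunit : ∀ z, ‖τ z‖ = 1) {a b : ℝ} (hab : a ≤ b) {v : E} (hv : ‖v‖ = 1)
    (horth : ⟪∫ x in a..b, τ x, v⟫_ℝ = 0) :
    ‖∫ x in a..b, τ x‖ ^ 2 ≤ (b - a) * ∫ x in a..b, (1 - ⟪τ x, v⟫_ℝ ^ 2) := by
  have hinner : ∫ x in a..b, ⟪τ x, v⟫_ℝ = ⟪∫ x in a..b, τ x, v⟫_ℝ := by
    have h := (innerSL ℝ v).intervalIntegral_comp_comm (hcont.intervalIntegrable (μ := volume) a b)
    simp only [innerSL_apply_apply, real_inner_comm _ v] at h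
    exact h
  have hproj : ∫ x in a..b, (τ x - ⟪τ x, v⟫_ℝ • v) = ∫ x in a..b, τ x := by
    rw [intervalIntegral.integral_sub (hcont.intervalIntegrable a b)
      ((by fun_prop : Continuous fun x ↦ ⟪τ x, v⟫_ℝ • v).intervalIntegrable a b),
      intervalIntegral.integral_smul_const, hinner, horth, zero_smul, sub_zero]
  calc ‖∫ x in a..b, τ x‖ ^ 2 = ‖∫ x in a..b, (τ x - ⟪τ x, v⟫_ℝ • v)‖ ^ 2 := by rw [hproj]
    _ ≤ (b - a) * ∫ x in a..b, ‖τ x - ⟪τ x, v⟫_ℝ • v‖ ^ 2 :=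
      norm_intervalIntegral_sq_le (by fun_prop) hab
    _ = (b - a) * ∫ x in a..b, (1 - ⟪τ x, v⟫_ℝ ^ 2) := by
      simp only [norm_sub_inner_smul_sq hv, hunit, one_pow]

end InnerProductSpace

lemma AmapUnit_smul (τ : ℝ → EuclideanSpace ℝ (Fin 3)) (c : ℝ) (v : EuclideanSpace ℝ (Fin 3)) :
    AmapUnit τ (c • v) = c • AmapUnit τ v := by
  simp only [AmapUnit, real_inner_smul_right, mul_smul, intervalIntegral.integral_smul,
    smul_comm (1 / (2 * π)) c, smul_sub]

lemma inner_AmapUnit_self {τ : ℝ → EuclideanSpace ℝ (Fin 3)} (hcont : Continuous τ)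
    (hper : Function.Periodic τ (2 * π)) {v : EuclideanSpace ℝ (Fin 3)} (hv : ‖v‖ = 1) (t : ℝ) :
    ⟪v, AmapUnit τ v⟫_ℝ = (2 * π)⁻¹ * ∫ x in t..t + 2 * π, (1 - ⟪τ x, v⟫_ℝ ^ 2) := by
  have hFper : Function.Periodic (fun x ↦ 1 - ⟪τ x, v⟫_ℝ ^ 2) (2 * π) :=
    fun x ↦ by simp only [hper x]
  have h := (innerSL ℝ v).intervalIntegral_comp_comm
    ((by fun_prop : Continuous fun x ↦ ⟪τ x, v⟫_ℝ • τ x).intervalIntegrable (μ := volume) (-π) π)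
  have hsq (x : ℝ) : ⟪v, ⟪τ x, v⟫_ℝ • τ x⟫_ℝ = ⟪τ x, v⟫_ℝ ^ 2 := by
    rw [real_inner_smul_right, real_inner_comm, sq]
  simp only [innerSL_apply_apply, hsq] at h
  rw [hFper.intervalIntegral_add_eq t (-π), show -π + 2 * π = π by ring, AmapUnit,
    inner_sub_right, real_inner_smul_right, real_inner_self_eq_norm_sq, hv, ← h,
    intervalIntegral.integral_sub intervalIntegrable_const
      ((by fun_prop : Continuous fun x ↦ ⟪τ x, v⟫_ℝ ^ 2).intervalIntegrable _ _),
    intervalIntegral.integral_const, smul_eq_mul]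
  field_simp
  ring

lemma inv_sq_le_inner_AmapUnit_self {τ γ : ℝ → EuclideanSpace ℝ (Fin 3)} (hcont : Continuous τ)
    (hper : Function.Periodic τ (2 * π)) (hperγ : Function.Periodic γ (2 * π))
    (hunit : ∀ z, ‖τ z‖ = 1) (hFTC : ∀ a b : ℝ, γ b - γ a = ∫ z in a..b, τ z)
    {δ : ℝ} (hδ : 0 < δ) (hdist : ∀ x y : ℝ, vartheta (x - y) ≤ δ * ‖γ x - γ y‖)
    {v : EuclideanSpace ℝ (Fin 3)} (hv : ‖v‖ = 1) :
    (δ ^ 2)⁻¹ ≤ ⟪v, AmapUnit τ v⟫_ℝ := by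
  let F : ℝ → ℝ := fun x ↦ 1 - ⟪τ x, v⟫_ℝ ^ 2
  have hγ : Continuous γ := continuous_of_forall_sub_eq_intervalIntegral hcont hFTC
  have half (a : ℝ) (horth : ⟪γ (a + π) - γ a, v⟫_ℝ = 0) :
      ‖γ (a + π) - γ a‖ ^ 2 ≤ π * ∫ x in a..a + π, F x := by
    rw [hFTC] at horth ⊢
    simpa using norm_intervalIntegral_sq_le_of_inner_eq_zero hcont hunit
      (by linarith [pi_pos] : a ≤ a + π) hv horth
  obtain ⟨x₀, hx₀⟩ := Function.Periodic.exists_apply_add_half_eq (hγ.inner continuous_const)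
    (fun x ↦ by simp only [hperγ x] : Function.Periodic (fun x ↦ ⟪γ x, v⟫_ℝ) (2 * π))
  set d := γ (x₀ + π) - γ x₀
  have hd : ⟪d, v⟫_ℝ = 0 := by simp only [d, inner_sub_left, hx₀, sub_self]
  have hd' : γ (x₀ + π + π) - γ (x₀ + π) = -d := by
    rw [add_assoc, ← two_mul, hperγ x₀]; exact (neg_sub _ _).symm
  have h₁ : ‖d‖ ^ 2 ≤ π * ∫ x in x₀..x₀ + π, F x := half x₀ hd
  have h₂ := half (x₀ + π) (by rw [hd', inner_neg_left, hd, neg_zero])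
  rw [hd', norm_neg] at h₂
  have hsum : (∫ x in x₀..x₀ + π, F x) + ∫ x in x₀ + π..x₀ + π + π, F x =
      2 * π * ⟪v, AmapUnit τ v⟫_ℝ := by
    have hF : Continuous F := by fun_prop
    rw [intervalIntegral.integral_add_adjacent_intervals (hF.intervalIntegrable _ _)
      (hF.intervalIntegrable _ _), add_assoc, ← two_mul, inner_AmapUnit_self hcont hper hv x₀]
    field_simp
    rfl
  have hlow : π ≤ δ * ‖d‖ := by
    simpa [vartheta_pi] using hdist (x₀ + π) x₀
  have hlow_sq : π ^ 2 ≤ δ ^ 2 * ‖d‖ ^ 2 := by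
    rw [← mul_pow]; exact pow_le_pow_left₀ pi_pos.le hlow 2
  have htot : 2 * ‖d‖ ^ 2 ≤ 2 * π ^ 2 * ⟪v, AmapUnit τ v⟫_ℝ :=
    calc 2 * ‖d‖ ^ 2 ≤ π * ((∫ x in x₀..x₀ + π, F x) + ∫ x in x₀ + π..x₀ + π + π, F x) := by
          linarith
      _ = 2 * π ^ 2 * ⟪v, AmapUnit τ v⟫_ℝ := by rw [hsum]; ring
  have key : π ^ 2 * 1 ≤ π ^ 2 * (⟪v, AmapUnit τ v⟫_ℝ * δ ^ 2) := by
    nlinarith [mul_le_mul_of_nonneg_left htot (sq_nonneg δ)]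
  rw [inv_le_iff_one_le_mul₀ (by positivity)]
  exact le_of_mul_le_mul_left key (by positivity)

/-- `δ` is any upper bound for the distortion `δ_∞(γ)`, and `‖A_τ⁻¹‖_op ≤ 2δ²` is stated as
`‖w‖ ≤ 2δ² ‖A_τ w‖` for all `w`. -/
theorem stmt14 (τ γ : ℝ → EuclideanSpace ℝ (Fin 3))
    (hcont : Continuous τ)
    (hper : Function.Periodic τ (2 * π))
    (hperγ : Function.Periodic γ (2 * π))
    (hunit : ∀ z, ‖τ z‖ = 1)
    (hFTC : ∀ a b : ℝ, γ b - γ a = ∫ z in a..b, τ z) :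
    ∀ δ : ℝ, 0 < δ →
      (∀ x y : ℝ, vartheta (x - y) ≤ δ * ‖γ x - γ y‖) →
      (∀ v : EuclideanSpace ℝ (Fin 3), ‖v‖ = 1 →
        (δ ^ 2)⁻¹ / 2 ≤ (inner ℝ v (AmapUnit τ v) : ℝ)) ∧
      (∀ w : EuclideanSpace ℝ (Fin 3), ‖w‖ ≤ 2 * δ ^ 2 * ‖AmapUnit τ w‖) := by
  intro δ hδ hdist
  have hcoer (v : EuclideanSpace ℝ (Fin 3)) (hv : ‖v‖ = 1) : (δ ^ 2)⁻¹ ≤ ⟪v, AmapUnit τ v⟫_ℝ :=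
    inv_sq_le_inner_AmapUnit_self hcont hper hperγ hunit hFTC hδ hdist hv
  refine ⟨fun v hv ↦ (half_le_self (by positivity)).trans (hcoer v hv), fun w ↦ ?_⟩
  have hA := mul_norm_le_norm_apply_of_le_inner_apply (AmapUnit_smul τ) hcoer w
  rw [inv_mul_le_iff₀ (by positivity)] at hA
  nlinarith [norm_nonneg (AmapUnit τ w), sq_nonneg δ]
end
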